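/- arXiv:2312.17153 — 2 statements merged into one kernel-verified Lean document; each statement's English description precedes it below -/
import Mathlib

section
/- For n ≥ 1 and ℓ ≥ 1, the Stirling number of the second kind satisfies S(n+ℓ, ℓ) = Σ_{k=0}^{ℓ-1} T^(2)_{n,k} · C(2n + ℓ - k - 1, 2n), where T^(2)_{n,k} are the second-order Eulerian numbers. -/
/-- The `m`th-order Eulerian numbers `T^(m)_{n,k}`, with integer descent index `k`
(so `T^(m)_{n,k} = 0` for `k < 0` or `k ≥ n`). -/
def eulerianT (m : ℕ) : ℕ → ℤ → ℤ
  | 0, _ => 0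
  | 1, k => if k = 0 then 1 else 0
  | n + 2, k =>
      if k < 0 ∨ (n : ℤ) + 2 ≤ k then 0
      else (k + 1) * eulerianT m (n + 1) k +
        ((m : ℤ) * ((n : ℤ) + 2) - k - (m : ℤ) + 1) * eulerianT m (n + 1) (k - 1)

/-- Stirling numbers of the second kind `S(n,k)`: the number of partitions of an
`n`-set into `k` nonempty blocks. -/
def stirlingSecond : ℕ → ℕ → ℕ
  | 0, 0 => 1
  | 0, _ + 1 => 0
  | _ + 1, 0 => 0
  | n + 1, k + 1 => (k + 1) * stirlingSecond n (k + 1) + stirlingSecond n k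

/-!
Both sides satisfy the recurrence `S(n + ℓ + 1, ℓ + 1) = (ℓ + 1) S(n + ℓ, ℓ + 1) + S(n + ℓ, ℓ)`.
For the right-hand side `F(n, ℓ)`, Pascal's rule turns `F(n + 1, ℓ + 1) - F(n + 1, ℓ)` into a sum
against `C(·, 2n + 1)`; expanding `T^(2)_{n+1,k}` by its recurrence and shifting the index in the
second half leaves, termwise, the binomial identity
`(k + 1) C(a + 1, r + 1) + (r - k) C(a, r + 1) = (ℓ + 1) C(a, r)` for `a + k = r + ℓ`, `r = 2n`.
-/

open Finset

theorem stirlingSecond_eq_nat_stirlingSecond : stirlingSecond = Nat.stirlingSecond := by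
  funext n k
  induction n generalizing k with
  | zero => cases k <;> rfl
  | succ n ih =>
    cases k with
    | zero => rfl
    | succ k => rw [stirlingSecond, Nat.stirlingSecond_succ_succ, ih, ih]

theorem eulerianT_eq_zero (m n : ℕ) {k : ℤ} (hk : k < 0 ∨ n ≤ k) : eulerianT m n k = 0 := by
  match n with
  | 0 => rfl
  | 1 => rw [eulerianT, if_neg (by omega)]
  | n + 2 => rw [eulerianT, if_pos (by push_cast at hk; omega)]

theorem eulerianT_add_two (m n : ℕ) (k : ℤ) :
    eulerianT m (n + 2) k = (k + 1) * eulerianT m (n + 1) k +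
      ((m : ℤ) * ((n : ℤ) + 2) - k - (m : ℤ) + 1) * eulerianT m (n + 1) (k - 1) := by
  rw [eulerianT]
  split_ifs with h
  · rw [eulerianT_eq_zero m (n + 1) (k := k) (by push_cast; omega),
      eulerianT_eq_zero m (n + 1) (k := k - 1) (by push_cast; omega)]
    ring
  · rfl

theorem add_one_mul_choose_succ_add_sub_mul_choose_succ {a r j ℓ : ℕ} (h : a + j = r + ℓ) :
    ((j : ℤ) + 1) * (a + 1).choose (r + 1) + ((r : ℤ) - j) * a.choose (r + 1) =
      ((ℓ : ℤ) + 1) * a.choose r := by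
  have hsucc : ((r : ℤ) + 1) * a.choose (r + 1) = ((a : ℤ) - r) * a.choose r := by
    rcases le_or_gt r a with hra | hra
    · have := congrArg (Nat.cast : ℕ → ℤ) (Nat.choose_succ_right_eq a r)
      push_cast [hra] at this
      linarith
    · rw [Nat.choose_eq_zero_of_lt hra, Nat.choose_eq_zero_of_lt (by omega)]
      simp
  rw [Nat.choose_succ_succ', Nat.cast_add]
  have hcast : (a : ℤ) + j = r + ℓ := by exact_mod_cast h
  linear_combination hsucc + (a.choose r : ℤ) * hcast

-- Summed over the support `k < n` of `T^(2)_{n,·}`, so that the range does not depend on `ℓ`.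
def eulerianChooseSum (n ℓ : ℕ) : ℤ :=
  ∑ k ∈ range n, eulerianT 2 n k * ((2 * n + ℓ - k - 1).choose (2 * n) : ℤ)

theorem sum_range_eulerianT_mul_choose (n ℓ : ℕ) :
    ∑ k ∈ range ℓ, eulerianT 2 n k * ((2 * n + ℓ - k - 1).choose (2 * n) : ℤ) =
      eulerianChooseSum n ℓ := by
  calc _ = ∑ k ∈ range (n + ℓ), eulerianT 2 n k * ((2 * n + ℓ - k - 1).choose (2 * n) : ℤ) := by
        refine sum_subset (range_subset_range.2 (by omega)) fun k hk hkℓ => ?_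
        rw [Nat.choose_eq_zero_of_lt (by simp only [mem_range] at hk hkℓ; omega)]
        simp
    _ = eulerianChooseSum n ℓ := by
        refine (sum_subset (range_subset_range.2 (by omega)) fun k _ hk => ?_).symm
        rw [eulerianT_eq_zero 2 n (by simp only [mem_range] at hk; omega)]
        simp

theorem eulerianChooseSum_succ_right (n ℓ : ℕ) :
    eulerianChooseSum (n + 1) (ℓ + 1) = eulerianChooseSum (n + 1) ℓ +
      ∑ k ∈ range (n + 1),
        eulerianT 2 (n + 1) k * ((2 * n + 1 + ℓ - k).choose (2 * n + 1) : ℤ) := by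
  rw [eulerianChooseSum, eulerianChooseSum, ← sum_add_distrib]
  refine sum_congr rfl fun k hk => ?_
  have hk : k < n + 1 := mem_range.1 hk
  rw [show 2 * (n + 1) + (ℓ + 1) - k - 1 = (2 * n + 1 + ℓ - k) + 1 by omega,
    show 2 * (n + 1) + ℓ - k - 1 = 2 * n + 1 + ℓ - k by omega,
    show 2 * (n + 1) = 2 * n + 1 + 1 by ring, Nat.choose_succ_succ']
  push_cast
  ring

theorem sum_eulerianT_mul_choose_succ (n ℓ : ℕ) :
    ∑ k ∈ range (n + 2), eulerianT 2 (n + 2) k * ((2 * n + 3 + ℓ - k).choose (2 * n + 3) : ℤ) =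
      ((ℓ : ℤ) + 1) * eulerianChooseSum (n + 1) (ℓ + 1) := by
  set T := eulerianT 2 (n + 1) with hT
  have hT_neg : T (-1) = 0 := eulerianT_eq_zero 2 (n + 1) (by omega)
  have hT_top : T (n + 1 : ℕ) = 0 := eulerianT_eq_zero 2 (n + 1) (by omega)
  calc _ = ∑ k ∈ range (n + 2), ((k + 1 : ℤ) * T k * (2 * n + 3 + ℓ - k).choose (2 * n + 3) +
          (2 * n + 3 - k : ℤ) * T (k - 1) * (2 * n + 3 + ℓ - k).choose (2 * n + 3)) := by
        refine sum_congr rfl fun k _ => ?_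
        rw [hT, eulerianT_add_two]
        push_cast
        ring
    _ = ∑ k ∈ range (n + 1), ((k + 1 : ℤ) * T k * (2 * n + 3 + ℓ - k).choose (2 * n + 3) +
          (2 * n + 2 - k : ℤ) * T k * (2 * n + 2 + ℓ - k).choose (2 * n + 3)) := by
        rw [sum_add_distrib, sum_range_succ, sum_range_succ' fun k : ℕ =>
            (2 * n + 3 - k : ℤ) * T (k - 1) * (2 * n + 3 + ℓ - k).choose (2 * n + 3),
          hT_top, Nat.cast_zero, zero_sub, hT_neg, sum_add_distrib]
        simp only [mul_zero, zero_mul, add_zero]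
        congr 1
        refine sum_congr rfl fun k _ => ?_
        rw [show 2 * n + 3 + ℓ - (k + 1) = 2 * n + 2 + ℓ - k by omega, Nat.cast_succ,
          add_sub_cancel_right]
        ring
    _ = ((ℓ : ℤ) + 1) * eulerianChooseSum (n + 1) (ℓ + 1) := by
        rw [eulerianChooseSum, mul_sum]
        refine sum_congr rfl fun k hk => ?_
        have hk : k < n + 1 := mem_range.1 hk
        have key := add_one_mul_choose_succ_add_sub_mul_choose_succ
          (a := 2 * n + 2 + ℓ - k) (r := 2 * n + 2) (j := k) (ℓ := ℓ) (by omega)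
        rw [show 2 * n + 2 + ℓ - k + 1 = 2 * n + 3 + ℓ - k by omega] at key
        rw [show 2 * (n + 1) + (ℓ + 1) - k - 1 = 2 * n + 2 + ℓ - k by omega,
          show 2 * (n + 1) = 2 * n + 2 by ring]
        push_cast at key ⊢
        linear_combination T k * key

theorem eulerianChooseSum_add_two_succ (n ℓ : ℕ) :
    eulerianChooseSum (n + 2) (ℓ + 1) =
      (ℓ + 1) * eulerianChooseSum (n + 1) (ℓ + 1) + eulerianChooseSum (n + 2) ℓ := by
  rw [eulerianChooseSum_succ_right, show 2 * (n + 1) + 1 = 2 * n + 3 by ring,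
    sum_eulerianT_mul_choose_succ, add_comm]

theorem eulerianChooseSum_one (ℓ : ℕ) : eulerianChooseSum 1 ℓ = (ℓ + 1).choose 2 := by
  rw [eulerianChooseSum, sum_range_one, show 2 * 1 + ℓ - 0 - 1 = ℓ + 1 by omega]
  simp [eulerianT]

theorem eulerianChooseSum_zero_right (n : ℕ) : eulerianChooseSum n 0 = 0 :=
  sum_eq_zero fun k hk => by
    rw [Nat.choose_eq_zero_of_lt (by simp only [mem_range] at hk; omega)]
    simp

theorem stirlingSecond_add_eq_eulerianChooseSum {n : ℕ} (hn : 1 ≤ n) (ℓ : ℕ) :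
    (Nat.stirlingSecond (n + ℓ) ℓ : ℤ) = eulerianChooseSum n ℓ := by
  induction n, hn using Nat.le_induction generalizing ℓ with
  | base => rw [add_comm, Nat.stirlingSecond_succ_self_left, eulerianChooseSum_one]
  | succ n hn ih =>
    obtain ⟨n, rfl⟩ := Nat.exists_eq_add_of_le' hn
    induction ℓ with
    | zero =>
      rw [eulerianChooseSum_zero_right, add_zero, Nat.stirlingSecond_succ_zero, Nat.cast_zero]
    | succ ℓ ihℓ =>
      rw [show n + 1 + 1 + (ℓ + 1) = n + 1 + 1 + ℓ + 1 by ring, Nat.stirlingSecond_succ_succ]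
      push_cast
      rw [ihℓ, show n + 1 + 1 + ℓ = n + 1 + (ℓ + 1) by ring, ih, eulerianChooseSum_add_two_succ]

theorem stirlingSecond_eq_sum_eulerianT2_general (n ℓ : ℕ) (hn : 1 ≤ n) :
    (stirlingSecond (n + ℓ) ℓ : ℤ) =
      ∑ k ∈ Finset.range ℓ, eulerianT 2 n (k : ℤ) * ((2 * n + ℓ - k - 1).choose (2 * n) : ℤ) := by
  rw [stirlingSecond_eq_nat_stirlingSecond, sum_range_eulerianT_mul_choose,
    stirlingSecond_add_eq_eulerianChooseSum hn]

theorem stirlingSecond_eq_sum_eulerianT2 (n ℓ : ℕ) (hn : 1 ≤ n) (hℓ : 1 ≤ ℓ) :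
    (stirlingSecond (n + ℓ) ℓ : ℤ) =
      ∑ k ∈ Finset.range ℓ, eulerianT 2 n (k : ℤ) * ((2 * n + ℓ - k - 1).choose (2 * n) : ℤ) :=
  stirlingSecond_eq_sum_eulerianT2_general n ℓ hn
end

section
/- For k ≥ 1 and k+1 ≤ i ≤ 2k, the second-order Eulerian numbers satisfy T^(2)_{k, 2k-i} = Σ_{n=0}^{i} (-1)^{i-n} · c(n, n-k) · C(2k+1, i-n), where c(n, j) is the unsigned Stirling number of the first kind. -/
/-- Unsigned Stirling numbers of the first kind `c(n,j)` (Stirling cycle numbers),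
with integer index `j` (so `c(n,j) = 0` for `j < 0`). -/
def stirlingFirst : ℕ → ℤ → ℕ
  | 0, j => if j = 0 then 1 else 0
  | n + 1, j => n * stirlingFirst n j + stirlingFirst n (j - 1)

/-!
Put `S_k(x) = ∑ₙ c(n, n-k) xⁿ`; the sum on the right is the coefficient of `xⁱ` in
`S_k(x) (1 - x)^(2k+1)`. The Stirling recurrence `c(n+1, j) = n c(n, j) + c(n, j-1)` says
`(1 - x) S_{k+1} = x² S_k'`, and this turns into the statement that these coefficients `U_k(i)`
satisfy `U_{k+1}(i+2) = (i+1) U_k(i+1) + (2k+1-i) U_k(i)`. Read at `j = 2k - i`, this is the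
recurrence of the second-order Eulerian numbers, so the identity follows by induction on `k`.
-/

open Finset

section Stirling

theorem stirlingFirst_of_neg (n : ℕ) {j : ℤ} (hj : j < 0) : stirlingFirst n j = 0 := by
  induction n generalizing j with
  | zero => simp [stirlingFirst, hj.ne]
  | succ n ih => simp [stirlingFirst, ih hj, ih (show j - 1 < 0 by omega)]

theorem stirlingFirst_of_lt {n : ℕ} {j : ℤ} (hj : (n : ℤ) < j) : stirlingFirst n j = 0 := by
  induction n generalizing j with
  | zero => simp [stirlingFirst]; omega
  | succ n ih =>
    simp [stirlingFirst, ih (show (n : ℤ) < j by omega), ih (show (n : ℤ) < j - 1 by omega)]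

theorem stirlingFirst_self (n : ℕ) : stirlingFirst n n = 1 := by
  induction n with
  | zero => simp [stirlingFirst]
  | succ n ih => simp [stirlingFirst, ih, stirlingFirst_of_lt (show (n : ℤ) < n + 1 by omega)]

theorem stirlingFirst_succ_zero (n : ℕ) : stirlingFirst (n + 1) 0 = 0 := by
  induction n with
  | zero => simp [stirlingFirst]
  | succ n ih =>
    rw [stirlingFirst, ih, stirlingFirst_of_neg _ (by norm_num : (0 : ℤ) - 1 < 0)]; rfl

/-- The coefficients of `S_k`. -/
def stirlingFirstSub (k n : ℕ) : ℤ := stirlingFirst n ((n : ℤ) - k)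

theorem stirlingFirstSub_zero_left (n : ℕ) : stirlingFirstSub 0 n = 1 := by
  simp [stirlingFirstSub, stirlingFirst_self]

theorem stirlingFirstSub_eq_zero {k n : ℕ} (hk : 1 ≤ k) (hn : n ≤ k) :
    stirlingFirstSub k n = 0 := by
  rcases n with _ | n
  · simp [stirlingFirstSub, stirlingFirst]; omega
  · obtain h | h : ((n + 1 : ℕ) : ℤ) - k < 0 ∨ ((n + 1 : ℕ) : ℤ) - k = 0 := by omega
    · rw [stirlingFirstSub, stirlingFirst_of_neg _ h]; rfl
    · rw [stirlingFirstSub, h, stirlingFirst_succ_zero]; rfl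

theorem stirlingFirstSub_succ_zero (k : ℕ) : stirlingFirstSub (k + 1) 0 = 0 := by
  simp [stirlingFirstSub, stirlingFirst]; omega

theorem stirlingFirstSub_succ_succ (k n : ℕ) :
    stirlingFirstSub (k + 1) (n + 1) = n * stirlingFirstSub k n + stirlingFirstSub (k + 1) n := by
  simp only [stirlingFirstSub, stirlingFirst]
  rw [show ((n + 1 : ℕ) : ℤ) - ((k + 1 : ℕ) : ℤ) = n - k by push_cast; ring,
    show (n : ℤ) - k - 1 = n - ((k + 1 : ℕ) : ℤ) by push_cast; ring]
  push_cast
  ring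

end Stirling

section Eulerian

theorem eulerianT_of_neg (m n : ℕ) {j : ℤ} (hj : j < 0) : eulerianT m n j = 0 := by
  match n with
  | 0 => rfl
  | 1 => simp [eulerianT, hj.ne]
  | n + 2 => simp [eulerianT, hj]

theorem eulerianT_of_le (m n : ℕ) {j : ℤ} (hj : (n : ℤ) ≤ j) : eulerianT m n j = 0 := by
  match n with
  | 0 => rfl
  | 1 => simp [eulerianT, show j ≠ 0 by omega]
  | n + 2 => simp [eulerianT, show (n : ℤ) + 2 ≤ j by omega]

theorem eulerianT_succ (m : ℕ) {n : ℕ} (hn : 1 ≤ n) (j : ℤ) :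
    eulerianT m (n + 1) j =
      (j + 1) * eulerianT m n j + (m * n - j + 1) * eulerianT m n (j - 1) := by
  obtain ⟨n, rfl⟩ : ∃ n', n = n' + 1 := ⟨n - 1, by omega⟩
  rw [eulerianT]
  split_ifs with h
  · rcases h with h | h
    · rw [eulerianT_of_neg m _ h, eulerianT_of_neg m _ (show j - 1 < 0 by omega)]; ring
    · rw [eulerianT_of_le m _ (show ((n + 1 : ℕ) : ℤ) ≤ j by omega),
        eulerianT_of_le m _ (show ((n + 1 : ℕ) : ℤ) ≤ j - 1 by omega)]; ring
  · push_cast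
    ring

end Eulerian

section AltBinomConv

/-- The coefficient of `xⁱ` in `(∑ₙ aₙ xⁿ) (1 - x)ᵗ`. -/
def altBinomConv (a : ℕ → ℤ) (t i : ℕ) : ℤ :=
  ∑ n ∈ range (i + 1), (-1 : ℤ) ^ (i - n) * a n * (t.choose (i - n) : ℤ)

variable (a b : ℕ → ℤ) (t i : ℕ)

theorem altBinomConv_add : altBinomConv (a + b) t i = altBinomConv a t i + altBinomConv b t i := by
  simp only [altBinomConv, Pi.add_apply, mul_add, add_mul, sum_add_distrib]

theorem altBinomConv_eq_zero (ha : ∀ n ≤ i, a n = 0) : altBinomConv a t i = 0 :=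
  sum_eq_zero fun n hn => by simp [ha n (by simpa [Nat.lt_succ_iff] using hn)]

theorem altBinomConv_succ_right_of_zero (ha : a 0 = 0) :
    altBinomConv a t (i + 1) = altBinomConv (fun n => a (n + 1)) t i := by
  simp [altBinomConv, sum_range_succ' _ (i + 1), ha]

theorem altBinomConv_succ_succ :
    altBinomConv a (t + 1) (i + 1) = altBinomConv a t (i + 1) - altBinomConv a t i := by
  simp only [altBinomConv]
  rw [sum_range_succ, sum_range_succ _ (i + 1), add_sub_right_comm, ← sum_sub_distrib]
  congr 1
  · refine sum_congr rfl fun n hn => ?_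
    obtain ⟨d, rfl⟩ := Nat.exists_eq_add_of_le (Nat.lt_succ_iff.1 (mem_range.1 hn))
    rw [show n + d + 1 - n = d + 1 by omega, show n + d - n = d by omega, Nat.choose_succ_succ]
    push_cast
    ring
  · simp

theorem altBinomConv_natCast_mul :
    altBinomConv (fun n => n * a n) (t + 1) (i + 1) =
      (i + 1) * altBinomConv a (t + 1) (i + 1) + (t + 1) * altBinomConv a t i := by
  simp only [altBinomConv]
  rw [sum_range_succ, sum_range_succ _ (i + 1), mul_add, mul_sum, mul_sum, add_right_comm,
    ← sum_add_distrib]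
  congr 1
  · refine sum_congr rfl fun n hn => ?_
    obtain ⟨d, rfl⟩ := Nat.exists_eq_add_of_le (Nat.lt_succ_iff.1 (mem_range.1 hn))
    rw [show n + d + 1 - n = d + 1 by omega, show n + d - n = d by omega]
    have hchoose : ((t + 1 : ℕ) : ℤ) * t.choose d = (t + 1).choose (d + 1) * (d + 1 : ℕ) := by
      exact_mod_cast Nat.add_one_mul_choose_eq t d
    push_cast at hchoose ⊢
    linear_combination -((-1 : ℤ) ^ d * a n) * hchoose
  · simp

end AltBinomConv

theorem altBinomConv_of_succ_eq {a b : ℕ → ℤ} (hb₀ : b 0 = 0)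
    (hb : ∀ n, b (n + 1) = n * a n + b n) (t i : ℕ) :
    altBinomConv b (t + 2) (i + 2) =
      (i + 1) * altBinomConv a t (i + 1) + (t - i) * altBinomConv a t i := by
  have hshift : (fun n => b (n + 1)) = (fun n => n * a n) + b := funext hb
  calc altBinomConv b (t + 2) (i + 2)
      = altBinomConv b (t + 1) (i + 2) - altBinomConv b (t + 1) (i + 1) :=
        altBinomConv_succ_succ b (t + 1) (i + 1)
    _ = altBinomConv (fun n => n * a n) (t + 1) (i + 1) := by
        rw [altBinomConv_succ_right_of_zero b _ _ hb₀, hshift, altBinomConv_add]; ring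
    _ = _ := by
        rw [altBinomConv_natCast_mul, altBinomConv_succ_succ a t i]; ring

theorem altBinomConv_stirlingFirstSub_zero_one (i : ℕ) :
    altBinomConv (stirlingFirstSub 0) 1 i = if i = 0 then 1 else 0 := by
  rcases i with _ | i
  · simp [altBinomConv, stirlingFirstSub_zero_left]
  · rw [altBinomConv, sum_range_succ, sum_range_succ, sum_eq_zero fun n hn => ?_]
    · simp [stirlingFirstSub_zero_left]
    · rw [Nat.choose_eq_zero_of_lt (by simp at hn; omega), Nat.cast_zero, mul_zero]

theorem altBinomConv_stirlingFirstSub_succ (k i : ℕ) :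
    altBinomConv (stirlingFirstSub (k + 1)) (2 * (k + 1) + 1) (i + 2) =
      (i + 1) * altBinomConv (stirlingFirstSub k) (2 * k + 1) (i + 1) +
        (2 * k + 1 - i) * altBinomConv (stirlingFirstSub k) (2 * k + 1) i := by
  rw [show 2 * (k + 1) + 1 = 2 * k + 1 + 2 by ring,
    altBinomConv_of_succ_eq (stirlingFirstSub_succ_zero k) (stirlingFirstSub_succ_succ k)]
  push_cast
  ring

theorem eulerianT_two_eq_altBinomConv (k : ℕ) :
    ∀ i, k + 1 ≤ i →
      eulerianT 2 k (2 * k - i) = altBinomConv (stirlingFirstSub k) (2 * k + 1) i := by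
  induction k with
  | zero =>
    intro i hi
    rw [altBinomConv_stirlingFirstSub_zero_one, if_neg (by omega)]
    rfl
  | succ k ih =>
    intro i hi
    obtain ⟨m, rfl⟩ : ∃ m, i = m + 2 := ⟨i - 2, by omega⟩
    rw [altBinomConv_stirlingFirstSub_succ,
      show 2 * ((k + 1 : ℕ) : ℤ) - ((m + 2 : ℕ) : ℤ) = 2 * k - m by push_cast; ring]
    rcases Nat.eq_zero_or_pos k with rfl | hk
    -- `T^(2)_{1,·}` is a base case of the definition, not an instance of the recurrence.
    · rcases m with _ | m <;> simp [altBinomConv_stirlingFirstSub_zero_one, eulerianT]; omega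
    have hprev := ih (m + 1) (by omega)
    have hcur : eulerianT 2 k (2 * k - m) = altBinomConv (stirlingFirstSub k) (2 * k + 1) m := by
      rcases (show k + 1 ≤ m ∨ m = k by omega) with h | rfl
      · exact ih m h
      · rw [eulerianT_of_le _ _ (by omega),
          altBinomConv_eq_zero _ _ _ fun n hn => stirlingFirstSub_eq_zero hk hn]
    rw [eulerianT_succ 2 hk, ← hcur, ← hprev,
      show 2 * (k : ℤ) - m - 1 = 2 * k - ((m + 1 : ℕ) : ℤ) by push_cast; ring]
    push_cast
    ring

theorem eulerianT2_eq_sum_stirlingFirst_general (k i : ℕ)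
    (hi1 : k + 1 ≤ i) :
    eulerianT 2 k (2 * (k : ℤ) - i) =
      ∑ n ∈ Finset.range (i + 1),
        (-1 : ℤ) ^ (i - n) * (stirlingFirst n ((n : ℤ) - k) : ℤ) *
          ((2 * k + 1).choose (i - n) : ℤ) :=
  eulerianT_two_eq_altBinomConv k i hi1

theorem eulerianT2_eq_sum_stirlingFirst (k i : ℕ) (hk : 1 ≤ k)
    (hi1 : k + 1 ≤ i) (hi2 : i ≤ 2 * k) :
    eulerianT 2 k (2 * (k : ℤ) - i) =
      ∑ n ∈ Finset.range (i + 1),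
        (-1 : ℤ) ^ (i - n) * (stirlingFirst n ((n : ℤ) - k) : ℤ) *
          ((2 * k + 1).choose (i - n) : ℤ) :=
  eulerianT2_eq_sum_stirlingFirst_general k i hi1
end
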